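/- arXiv:2303.01087 — 3 statements merged into one kernel-verified Lean document; each statement's English description precedes it below -/
import Mathlib

section
/- For every h in H^{1/2}_+(𝕋) and u in L^2_+(𝕋), the Toeplitz operator satisfies ‖T_ū h‖_{L²}² ≤ (⟨Dh, h⟩ + ‖h‖_{L²}²) · ‖u‖_{L²}², where D = −i∂_x. -/
open scoped BigOperators
open Filter

noncomputable section

/-!  Fourier–coefficient model of the circle `𝕋 = ℝ/2πℤ`.

A function `u ∈ L²₊(𝕋)` (Hardy space) is identified with its sequence of
Fourier coefficients `u : ℕ → ℂ`, `u n = û(n)`; a general function on the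
circle is identified with `f : ℤ → ℂ`.  The inner product is
`⟨u,v⟩ = (1/2π)∫ u v̄ = Σ û(n) conj(v̂(n))`. -/

/-- Inner product `⟨u,v⟩ = Σₙ û(n) conj(v̂(n))` on the Hardy space. -/
def hinner (u v : ℕ → ℂ) : ℂ := ∑' n : ℕ, u n * (starRingEnd ℂ) (v n)

/-- Squared `L²` norm. -/
def l2sq (u : ℕ → ℂ) : ℝ := ∑' n : ℕ, ‖u n‖ ^ 2

/-- Membership in the Hardy space `L²₊(𝕋)`. -/
def MemL2 (u : ℕ → ℂ) : Prop := Summable fun n : ℕ => ‖u n‖ ^ 2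

/-- Membership in the Hardy–Sobolev space `H^s₊(𝕋)`. -/
def MemHs (s : ℝ) (u : ℕ → ℂ) : Prop :=
  Summable fun n : ℕ => (1 + (n : ℝ) ^ 2) ^ s * ‖u n‖ ^ 2

/-- The quadratic form `⟨Dh, h⟩ = Σ k |ĥ(k)|²` of `D = -i∂ₓ`. -/
def dform (h : ℕ → ℂ) : ℝ := ∑' k : ℕ, (k : ℝ) * ‖h k‖ ^ 2

/-- Toeplitz operator with anti-analytic symbol `ū`:
`(T_ū h)(n) = (Π(ū h))^(n) = Σ_p ĥ(n+p) conj(û(p))`. -/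
def Tbar (u h : ℕ → ℂ) : ℕ → ℂ :=
  fun n => ∑' p : ℕ, h (n + p) * (starRingEnd ℂ) (u p)

/-- Toeplitz operator with analytic symbol `u`:
`(T_u h)(n) = (Π(u h))^(n) = Σ_{k ≤ n} û(n-k) ĥ(k)`. -/
def Tan (u h : ℕ → ℂ) : ℕ → ℂ :=
  fun n => ∑ k ∈ Finset.range (n + 1), u (n - k) * h k

/-- `D = -i ∂ₓ` in Fourier coefficients. -/
def Dop (h : ℕ → ℂ) : ℕ → ℂ := fun n => (n : ℂ) * h n

/-- `∂ₓ` in Fourier coefficients. -/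
def dx (u : ℕ → ℂ) : ℕ → ℂ := fun n => Complex.I * (n : ℂ) * u n

/-- The Lax operator `L_u = D - T_u T_ū`. -/
def Lop (u h : ℕ → ℂ) : ℕ → ℂ := fun n => Dop h n - Tan u (Tbar u h) n

/-- The operator `B_u = T_u T_{∂ₓū} - T_{∂ₓu} T_ū + i (T_u T_ū)²`. -/
def Bop (u h : ℕ → ℂ) : ℕ → ℂ := fun n =>
  Tan u (Tbar (dx u) h) n - Tan (dx u) (Tbar u h) n
    + Complex.I * Tan u (Tbar u (Tan u (Tbar u h))) n

/-- The shift operator `S : h ↦ e^{ix} h`. -/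
def S (h : ℕ → ℂ) : ℕ → ℂ := fun n => if n = 0 then 0 else h (n - 1)

/-- The adjoint shift `S* = T_{e^{-ix}}`. -/
def Sstar (h : ℕ → ℂ) : ℕ → ℂ := fun n => h (n + 1)

/-- The constant function `1`. -/
def one : ℕ → ℂ := fun n => if n = 0 then 1 else 0

/- general functions on the circle, via two-sided Fourier coefficients -/

/-- Fourier coefficients of the complex conjugate: `(f̄)^(n) = conj (f̂(-n))`. -/
def conjZ (a : ℤ → ℂ) : ℤ → ℂ := fun n => (starRingEnd ℂ) (a (-n))

/-- A Hardy-space function viewed as a function on the circle. -/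
def extZ (u : ℕ → ℂ) : ℤ → ℂ := fun n => if 0 ≤ n then u n.toNat else 0

/-- Fourier coefficients of a pointwise product (convolution). -/
def mulZ (a b : ℤ → ℂ) : ℤ → ℂ := fun n => ∑' m : ℤ, a m * b (n - m)

/-- `∂ₓ` in two-sided Fourier coefficients. -/
def dxZ (a : ℤ → ℂ) : ℤ → ℂ := fun n => Complex.I * (n : ℂ) * a n

/-- The Szegő projector `Π`, keeping only nonnegative modes. -/
def PiProj (a : ℤ → ℂ) : ℤ → ℂ := fun n => if 0 ≤ n then a n else 0

/-- The Szegő projector with values in the Hardy space. -/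
def PiZ (a : ℤ → ℂ) : ℕ → ℂ := fun n => a (n : ℤ)

/-- Membership in `L²(𝕋)`. -/
def MemL2Z (a : ℤ → ℂ) : Prop := Summable fun n : ℤ => ‖a n‖ ^ 2

/-- Fourier coefficient of the nonlinearity `D Π(|u|²) · u`
(note `Π(|u|²)^(k) = Σ_p û(k+p) conj(û(p)) = (T_ū u)(k)`). -/
def NLcoeff (u : ℕ → ℂ) : ℕ → ℂ :=
  fun n => ∑ k ∈ Finset.range (n + 1), (k : ℂ) * Tbar u u k * u (n - k)

/-- `u : ℝ → (ℕ → ℂ)` is an `H^s`-solution of the focusing Calogero–Sutherland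
DNLS equation `i∂ₜu + ∂ₓ²u + 2DΠ(|u|²)u = 0` on `[-T,T]`, in Fourier
coefficients: `∂ₜ û(n) = i(-n² û(n) + 2 (DΠ(|u|²)u)^(n))`. -/
def SolvesCS (s : ℝ) (T : ℝ) (u : ℝ → ℕ → ℂ) : Prop :=
  (∀ t ∈ Set.Icc (-T) T, MemHs s (u t)) ∧
  (∀ n : ℕ, ContinuousOn (fun t => u t n) (Set.Icc (-T) T)) ∧
  ∀ t ∈ Set.Icc (-T) T, ∀ n : ℕ,
    HasDerivAt (fun τ => u τ n)
      (Complex.I * (-(n : ℂ) ^ 2 * u t n + 2 * NLcoeff (u t) n)) t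

/-! By Cauchy–Schwarz in `p`, `|(T_ū h)(n)|² ≤ ‖u‖² Σ_p |ĥ(n+p)|²`, and summing over `n`
counts every `|ĥ(k)|²` once for each of the `k + 1` splittings `k = n + p`, which gives
`Σ_k (k+1) |ĥ(k)|² = ⟨Dh,h⟩ + ‖h‖²`. -/

open Finset in
theorem hasSum_tsum_comp_add_of_nonneg {f : ℕ → ℝ} (hf : 0 ≤ f)
    (h : Summable fun k : ℕ => ((k : ℝ) + 1) * f k) :
    HasSum (fun n => ∑' p, f (n + p)) (∑' k : ℕ, ((k : ℝ) + 1) * f k) := by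
  have hfiber (k : ℕ) : ∑' _ : antidiagonal k, f k = ((k : ℝ) + 1) * f k := by
    simp [tsum_fintype, Finset.Nat.card_antidiagonal]
  have hsigma : HasSum (fun x : Σ k, antidiagonal k => f x.1)
      (∑' k : ℕ, ((k : ℝ) + 1) * f k) := by
    have hs : Summable fun x : Σ k, antidiagonal k => f x.1 :=
      (summable_sigma_of_nonneg fun x => hf x.1).mpr
        ⟨fun _ => .of_finite, by simpa only [hfiber] using h⟩
    simpa only [hs.tsum_sigma, hfiber] using hs.hasSum
  have hprod : HasSum (fun q : ℕ × ℕ => f (q.1 + q.2)) (∑' k : ℕ, ((k : ℝ) + 1) * f k) := by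
    refine HasAntidiagonal.sigmaAntidiagonalEquivProd.hasSum_iff.mp ?_
    convert hsigma using 2 with x
    exact congrArg f (mem_antidiagonal.mp x.2.2)
  have hf_sum : Summable f := h.of_nonneg_of_le hf fun k =>
    le_mul_of_one_le_left (hf k) (le_add_of_nonneg_left k.cast_nonneg)
  exact hprod.prod_fiberwise fun n => (hf_sum.comp_injective (add_right_injective n)).hasSum

theorem Real.tsum_mul_sq_le_of_nonneg {ι : Type*} {f g : ι → ℝ} (hf : ∀ i, 0 ≤ f i)
    (hg : ∀ i, 0 ≤ g i) (hf_sum : Summable fun i => f i ^ 2)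
    (hg_sum : Summable fun i => g i ^ 2) :
    Summable (fun i => f i * g i) ∧
      (∑' i, f i * g i) ^ 2 ≤ (∑' i, f i ^ 2) * ∑' i, g i ^ 2 := by
  have hsq {a : ι → ℝ} (ha : Summable fun i => a i ^ 2) :
      HasSum (fun i => a i ^ (2 : ℝ)) (√(∑' i, a i ^ 2) ^ (2 : ℝ)) := by
    simpa only [Real.rpow_two, Real.sq_sqrt (tsum_nonneg fun i => sq_nonneg (a i))]
      using ha.hasSum
  obtain ⟨C, hC0, hC, hfg⟩ := Real.inner_le_Lp_mul_Lq_hasSum_of_nonneg .two_two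
    (Real.sqrt_nonneg _) (Real.sqrt_nonneg _) hf hg (hsq hf_sum) (hsq hg_sum)
  refine ⟨hfg.summable, ?_⟩
  calc (∑' i, f i * g i) ^ 2 = C ^ 2 := by rw [hfg.tsum_eq]
    _ ≤ (√(∑' i, f i ^ 2) * √(∑' i, g i ^ 2)) ^ 2 := by gcongr
    _ = (∑' i, f i ^ 2) * ∑' i, g i ^ 2 := by
      rw [mul_pow, Real.sq_sqrt (tsum_nonneg fun i => sq_nonneg _),
        Real.sq_sqrt (tsum_nonneg fun i => sq_nonneg _)]

theorem sq_norm_tsum_mul_le {ι 𝕜 : Type*} [NormedDivisionRing 𝕜] {a b : ι → 𝕜}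
    (ha : Summable fun i => ‖a i‖ ^ 2) (hb : Summable fun i => ‖b i‖ ^ 2) :
    ‖∑' i, a i * b i‖ ^ 2 ≤ (∑' i, ‖a i‖ ^ 2) * ∑' i, ‖b i‖ ^ 2 := by
  obtain ⟨hab, hCS⟩ := Real.tsum_mul_sq_le_of_nonneg (fun i => norm_nonneg (a i))
    (fun i => norm_nonneg (b i)) ha hb
  have hnorm : ‖∑' i, a i * b i‖ ≤ ∑' i, ‖a i‖ * ‖b i‖ := by
    simpa only [norm_mul] using
      norm_tsum_le_tsum_norm (f := fun i => a i * b i) (by simpa only [norm_mul] using hab)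
  exact (pow_le_pow_left₀ (norm_nonneg _) hnorm 2).trans hCS

theorem sq_norm_Tbar_le {u h : ℕ → ℂ} (hu : MemL2 u) (hh : MemL2 h) (n : ℕ) :
    ‖Tbar u h n‖ ^ 2 ≤ (∑' p, ‖h (n + p)‖ ^ 2) * l2sq u := by
  have hu' : Summable fun p => ‖starRingEnd ℂ (u p)‖ ^ 2 := by
    simp only [RCLike.norm_conj]; exact hu
  exact (sq_norm_tsum_mul_le (hh.comp_injective (add_right_injective n)) hu').trans_eq
    (by simp only [RCLike.norm_conj, l2sq])

theorem MemHs.memL2 {s : ℝ} {h : ℕ → ℂ} (hs : 0 ≤ s) (hh : MemHs s h) : MemL2 h :=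
  hh.of_nonneg_of_le (fun _ => sq_nonneg _) fun _ => le_mul_of_one_le_left (sq_nonneg _)
    (Real.one_le_rpow (le_add_of_nonneg_right (sq_nonneg _)) hs)

theorem MemHs.summable_add_one_mul {h : ℕ → ℂ} (hh : MemHs (1 / 2) h) :
    Summable fun k : ℕ => ((k : ℝ) + 1) * ‖h k‖ ^ 2 := by
  refine (hh.mul_left 2).of_nonneg_of_le (fun k => by positivity) fun k => ?_
  have hweight : (k : ℝ) + 1 ≤ 2 * (1 + (k : ℝ) ^ 2) ^ (1 / 2 : ℝ) := by
    rw [← Real.sqrt_eq_rpow]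
    have hone : 1 ≤ √(1 + (k : ℝ) ^ 2) :=
      Real.one_le_sqrt.mpr (le_add_of_nonneg_right (sq_nonneg _))
    have hk : (k : ℝ) ≤ √(1 + (k : ℝ) ^ 2) := Real.le_sqrt_of_sq_le (by linarith)
    linarith
  calc ((k : ℝ) + 1) * ‖h k‖ ^ 2 ≤ 2 * (1 + (k : ℝ) ^ 2) ^ (1 / 2 : ℝ) * ‖h k‖ ^ 2 := by
        gcongr
    _ = 2 * ((1 + (k : ℝ) ^ 2) ^ (1 / 2 : ℝ) * ‖h k‖ ^ 2) := mul_assoc _ _ _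

theorem MemHs.dform_add_l2sq {h : ℕ → ℂ} (hh : MemHs (1 / 2) h) :
    dform h + l2sq h = ∑' k : ℕ, ((k : ℝ) + 1) * ‖h k‖ ^ 2 := by
  have hw := hh.summable_add_one_mul
  have hD : Summable fun k : ℕ => (k : ℝ) * ‖h k‖ ^ 2 :=
    hw.of_nonneg_of_le (fun k => by positivity) fun k => by gcongr; linarith
  rw [dform, l2sq, ← hD.tsum_add (hh.memL2 (by norm_num))]
  simp only [add_mul, one_mul]

/-- For `h ∈ H^{1/2}₊(𝕋)`, `u ∈ L²₊(𝕋)`,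
`‖T_ū h‖² ≤ (⟨Dh,h⟩ + ‖h‖²) ‖u‖²`. -/
theorem toeplitz_sharp_bound (u h : ℕ → ℂ) (hu : MemL2 u) (hh : MemHs (1/2) h) :
    l2sq (Tbar u h) ≤ (dform h + l2sq h) * l2sq u := by
  have hrows := hasSum_tsum_comp_add_of_nonneg (fun k => sq_nonneg ‖h k‖)
    hh.summable_add_one_mul
  have hbound := sq_norm_Tbar_le hu (hh.memL2 (by norm_num))
  calc l2sq (Tbar u h) ≤ ∑' n, (∑' p, ‖h (n + p)‖ ^ 2) * l2sq u :=
        Summable.tsum_le_tsum hbound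
          ((hrows.summable.mul_right _).of_nonneg_of_le (fun n => sq_nonneg _) hbound)
          (hrows.summable.mul_right _)
    _ = (dform h + l2sq h) * l2sq u := by
        rw [tsum_mul_right, hrows.tsum_eq, hh.dform_add_l2sq]

end
end

section
/- Let u ∈ H^s_+(𝕋) with s > 3/2 and L_u = D − T_u T_ū on L^2_+(𝕋). Then [S*, L_u] = S* − ⟨·, u⟩ S* u, where S is the shift operator. -/
open scoped BigOperators
open Filter

noncomputable section

theorem Sstar_Dop (h : ℕ → ℂ) (n : ℕ) : Sstar (Dop h) n = Dop (Sstar h) n + Sstar h n := by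
  simp only [Sstar, Dop]
  push_cast
  ring

theorem Sstar_Tbar (u h : ℕ → ℂ) : Sstar (Tbar u h) = Tbar u (Sstar h) := by
  funext n
  simp only [Sstar, Tbar, Nat.add_right_comm]

theorem Tbar_apply_zero (u h : ℕ → ℂ) : Tbar u h 0 = hinner h u := by
  simp only [Tbar, hinner, zero_add]

theorem Sstar_Tan (u g : ℕ → ℂ) (n : ℕ) :
    Sstar (Tan u g) n = Tan u (Sstar g) n + g 0 * Sstar u n := by
  simp only [Sstar, Tan, Finset.sum_range_succ' _ (n + 1), Nat.succ_sub_succ, Nat.sub_zero]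
  ring

theorem shift_lax_commutator_general (u : ℕ → ℂ) :
    ∀ h : ℕ → ℂ, MemHs 1 h → ∀ n : ℕ,
      Sstar (Lop u h) n - Lop u (Sstar h) n
        = Sstar h n - hinner h u * Sstar u n := by
  intro h _ n
  have hD := Sstar_Dop h n
  have hT := Sstar_Tan u (Tbar u h) n
  rw [Sstar_Tbar, Tbar_apply_zero] at hT
  calc Sstar (Lop u h) n - Lop u (Sstar h) n
      = (Sstar (Dop h) n - Dop (Sstar h) n)
          - (Sstar (Tan u (Tbar u h)) n - Tan u (Tbar u (Sstar h)) n) := by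
        simp only [Sstar, Lop]; ring
    _ = Sstar h n - hinner h u * Sstar u n := by rw [hD, hT]; ring

/-- For `u ∈ H^s₊(𝕋)`, `s > 3/2`, and `L_u = D - T_u T_ū`,
`[S*, L_u] = S* − ⟨·, u⟩ S*u` (on the domain `H¹₊(𝕋)`). -/
theorem shift_lax_commutator (s : ℝ) (hs : 3/2 < s) (u : ℕ → ℂ) (hu : MemHs s u) :
    ∀ h : ℕ → ℂ, MemHs 1 h → ∀ n : ℕ,
      Sstar (Lop u h) n - Lop u (Sstar h) n
        = Sstar h n - hinner h u * Sstar u n :=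
  shift_lax_commutator_general u

end
end

section
/- Let u ∈ H^s_+(𝕋) with s > 3/2, L_u = D − T_u T_ū and B_u = T_u T_{∂_x ū} − T_{∂_x u} T_ū + i (T_u T_ū)². Then [S*, B_u] = i(S* L_u² − (L_u + Id)² S*). -/
open scoped BigOperators
open Filter

noncomputable section

/-!
`S*` commutes with `T_ū`, while `T_v S* = S* T_v - ⟨·, 1⟩ S* v` and `D S* = S* D - S*`. Hence
`L_u S* h = S* L_u h - S* h + (T_ū h)(0) S* u`, and both `[S*, B_u] h` and
`S* L_u² h - (L_u + 1)² S* h` become multiples of `S* u`, `S* ∂ₓu` and `S* T_u T_ū u`; the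
coefficients agree because `(T_{∂ₓū} h)(0) = -i (T_ū D h)(0)`. The series defining `T_ū` is only
split on bounded sequences, so it suffices that `u ∈ ℓ¹` and `h, Dh ∈ ℓ^∞`, which follow from
`u ∈ H^s` (`s > 1/2`) and `h ∈ H^1`.
-/

open Complex
open scoped ENNReal

section HsEmbeddings

lemma summable_one_add_sq_rpow_neg {s : ℝ} (hs : 1 / 2 < s) :
    Summable fun n : ℕ => ((1 + (n : ℝ) ^ 2) ^ s)⁻¹ := by
  have hpow : Summable fun n : ℕ => (((n + 1 : ℕ) : ℝ) ^ (2 * s))⁻¹ :=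
    (summable_nat_add_iff 1).2 (Real.summable_nat_rpow_inv.2 (by linarith))
  refine (summable_nat_add_iff 1).1 (hpow.of_nonneg_of_le (fun n => by positivity) fun n => ?_)
  have hn : (0 : ℝ) ≤ ((n + 1 : ℕ) : ℝ) := Nat.cast_nonneg _
  rw [Real.rpow_mul hn, Real.rpow_two]
  gcongr
  linarith

lemma memℓp_infty_of_summable_norm_sq {ι E : Type*} [NormedAddCommGroup E] {g : ι → E}
    (hg : Summable fun n => ‖g n‖ ^ 2) : Memℓp g ∞ :=
  ((memℓp_gen_iff (by norm_num : 0 < (2 : ENNReal).toReal)).2 (by simpa using hg)).of_exponent_ge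
    le_top

lemma memℓp_infty_of_summable_norm {ι E : Type*} [NormedAddCommGroup E] {g : ι → E}
    (hg : Summable fun n => ‖g n‖) : Memℓp g ∞ :=
  ((memℓp_gen_iff (by norm_num : 0 < (1 : ENNReal).toReal)).2 (by simpa using hg)).of_exponent_ge
    le_top

variable {s : ℝ} {f : ℕ → ℂ}

/-- AM-GM: `2‖f n‖ ≤ w⁻¹ + w ‖f n‖²` with `w = (1 + n²)^s`, and `∑ w⁻¹ < ∞` as `2s > 1`. -/
lemma MemHs.summable_norm (hs : 1 / 2 < s) (hf : MemHs s f) : Summable fun n => ‖f n‖ := by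
  refine ((summable_one_add_sq_rpow_neg hs).add hf).of_nonneg_of_le (fun n => norm_nonneg _)
    fun n => ?_
  set w := (1 + (n : ℝ) ^ 2) ^ s
  have hw : 0 < w := by positivity
  have hsq : 0 ≤ w⁻¹ * (1 - w * ‖f n‖) ^ 2 := by positivity
  have hexp : w⁻¹ * (1 - w * ‖f n‖) ^ 2 = w⁻¹ - 2 * ‖f n‖ + w * ‖f n‖ ^ 2 := by
    field_simp
    ring
  nlinarith [norm_nonneg (f n)]

lemma MemHs.memℓp_infty (hs : 0 ≤ s) (hf : MemHs s f) : Memℓp f ∞ := by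
  refine memℓp_infty_of_summable_norm_sq (hf.of_nonneg_of_le (fun n => by positivity) fun n => ?_)
  exact le_mul_of_one_le_left (by positivity) (Real.one_le_rpow (by nlinarith) hs)

lemma MemHs.memℓp_infty_Dop (hs : 1 ≤ s) (hf : MemHs s f) : Memℓp (Dop f) ∞ := by
  refine memℓp_infty_of_summable_norm_sq (hf.of_nonneg_of_le (fun n => by positivity) fun n => ?_)
  have hweight : (n : ℝ) ^ 2 ≤ (1 + (n : ℝ) ^ 2) ^ s :=
    calc (n : ℝ) ^ 2 ≤ 1 + (n : ℝ) ^ 2 := by linarith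
      _ = (1 + (n : ℝ) ^ 2) ^ (1 : ℝ) := (Real.rpow_one _).symm
      _ ≤ _ := Real.rpow_le_rpow_of_exponent_le (by nlinarith) hs
  simp only [Dop, norm_mul, Complex.norm_natCast, mul_pow]
  gcongr

end HsEmbeddings

section Toeplitz

variable {u v f g : ℕ → ℂ}

lemma norm_le_of_memℓp_infty {ι E : Type*} [NormedAddCommGroup E] {f : ι → E}
    (hf : Memℓp f ∞) : ∃ C, ∀ n, ‖f n‖ ≤ C := by
  obtain ⟨C, hC⟩ := memℓp_infty_iff.1 hf
  exact ⟨C, fun n => hC (Set.mem_range_self n)⟩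

lemma memℓp_infty_Sstar (hf : Memℓp f ∞) : Memℓp (Sstar f) ∞ := by
  obtain ⟨C, hC⟩ := norm_le_of_memℓp_infty hf
  exact memℓp_infty ⟨C, by rintro _ ⟨n, rfl⟩; exact hC (n + 1)⟩

lemma norm_Tbar_term_le {C : ℝ} (hC : ∀ m, ‖f m‖ ≤ C) (n p : ℕ) :
    ‖f (n + p) * (starRingEnd ℂ) (u p)‖ ≤ C * ‖u p‖ := by
  rw [norm_mul, Complex.norm_conj]
  exact mul_le_mul_of_nonneg_right (hC _) (norm_nonneg _)

lemma summable_Tbar_term (hu : Summable fun p => ‖u p‖) (hf : Memℓp f ∞) (n : ℕ) :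
    Summable fun p => f (n + p) * (starRingEnd ℂ) (u p) := by
  obtain ⟨C, hC⟩ := norm_le_of_memℓp_infty hf
  exact (hu.mul_left C).of_norm_bounded (norm_Tbar_term_le hC n)

lemma memℓp_infty_Tbar (hu : Summable fun p => ‖u p‖) (hf : Memℓp f ∞) :
    Memℓp (Tbar u f) ∞ := by
  obtain ⟨C, hC⟩ := norm_le_of_memℓp_infty hf
  refine memℓp_infty ⟨C * ∑' p, ‖u p‖, ?_⟩
  rintro _ ⟨n, rfl⟩
  exact tsum_of_norm_bounded (hu.hasSum.mul_left C) (norm_Tbar_term_le hC n)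

lemma memℓp_infty_Tan (hv : Summable fun p => ‖v p‖) (hf : Memℓp f ∞) :
    Memℓp (Tan v f) ∞ := by
  obtain ⟨C, hC⟩ := norm_le_of_memℓp_infty hf
  refine memℓp_infty ⟨(∑' p, ‖v p‖) * C, ?_⟩
  rintro _ ⟨n, rfl⟩
  have hC0 : 0 ≤ C := (norm_nonneg _).trans (hC 0)
  calc ‖Tan v f n‖ ≤ ∑ k ∈ Finset.range (n + 1), ‖v (n - k)‖ * C :=
        (norm_sum_le _ _).trans <| Finset.sum_le_sum fun k _ => by
          rw [norm_mul]; exact mul_le_mul_of_nonneg_left (hC k) (norm_nonneg _)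
    _ = (∑ k ∈ Finset.range (n + 1), ‖v k‖) * C := by
        rw [← Finset.sum_mul]
        simpa using congrArg (· * C) (Finset.sum_range_reflect (fun k => ‖v k‖) (n + 1))
    _ ≤ (∑' p, ‖v p‖) * C := by
        gcongr
        exact hv.sum_le_tsum _ fun _ _ => norm_nonneg _

lemma Tbar_add (hu : Summable fun p => ‖u p‖) (hf : Memℓp f ∞) (hg : Memℓp g ∞) :
    Tbar u (f + g) = Tbar u f + Tbar u g := by
  funext n
  simp only [Tbar, Pi.add_apply, add_mul]
  exact (summable_Tbar_term hu hf n).tsum_add (summable_Tbar_term hu hg n)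

lemma Tbar_sub (hu : Summable fun p => ‖u p‖) (hf : Memℓp f ∞) (hg : Memℓp g ∞) :
    Tbar u (f - g) = Tbar u f - Tbar u g := by
  funext n
  simp only [Tbar, Pi.sub_apply, sub_mul]
  exact (summable_Tbar_term hu hf n).tsum_sub (summable_Tbar_term hu hg n)

lemma Tbar_smul (c : ℂ) : Tbar u (c • f) = c • Tbar u f := by
  funext n
  simp only [Tbar, Pi.smul_apply, smul_eq_mul, mul_assoc, tsum_mul_left]

lemma Tan_add : Tan v (f + g) = Tan v f + Tan v g := by
  funext n
  simp only [Tan, Pi.add_apply, mul_add, Finset.sum_add_distrib]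

lemma Tan_sub : Tan v (f - g) = Tan v f - Tan v g := by
  funext n
  simp only [Tan, Pi.sub_apply, mul_sub, Finset.sum_sub_distrib]

lemma Tan_smul (c : ℂ) : Tan v (c • f) = c • Tan v f := by
  funext n
  simp only [Tan, Pi.smul_apply, smul_eq_mul, Finset.mul_sum, mul_left_comm]

lemma Tbar_Sstar : Tbar u (Sstar f) = Sstar (Tbar u f) := by
  funext n
  simp only [Tbar, Sstar]
  exact tsum_congr fun p => by rw [Nat.add_right_comm]

lemma Tan_Sstar : Tan v (Sstar f) = Sstar (Tan v f) - f 0 • Sstar v := by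
  funext n
  simp only [Tan, Sstar, Pi.sub_apply, Pi.smul_apply, smul_eq_mul]
  rw [Finset.sum_range_succ' _ (n + 1)]
  simp only [Nat.add_sub_add_right, Nat.sub_zero]
  ring

lemma Tan_Tbar_Sstar :
    Tan u (Tbar u (Sstar f)) = Sstar (Tan u (Tbar u f)) - Tbar u f 0 • Sstar u := by
  rw [Tbar_Sstar, Tan_Sstar]

lemma Tbar_dx_zero : Tbar (dx u) f 0 = -I * Tbar u (Dop f) 0 := by
  simp only [Tbar, dx, Dop, ← tsum_mul_left]
  refine tsum_congr fun p => ?_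
  simp only [zero_add, map_mul, Complex.conj_I, map_natCast]
  ring

end Toeplitz

section LaxPair

variable {u f g : ℕ → ℂ}

lemma Dop_add : Dop (f + g) = Dop f + Dop g := by
  funext n
  simp only [Dop, Pi.add_apply, mul_add]

lemma Dop_sub : Dop (f - g) = Dop f - Dop g := by
  funext n
  simp only [Dop, Pi.sub_apply, mul_sub]

lemma Dop_smul (c : ℂ) : Dop (c • f) = c • Dop f := by
  funext n
  simp only [Dop, Pi.smul_apply, smul_eq_mul, mul_left_comm]

lemma Dop_Sstar : Dop (Sstar f) = Sstar (Dop f) - Sstar f := by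
  funext n
  simp only [Dop, Sstar, Pi.sub_apply]
  push_cast
  ring

lemma dx_eq_smul_Dop : dx u = I • Dop u := by
  funext n
  simp only [dx, Dop, Pi.smul_apply, smul_eq_mul, mul_assoc]

lemma Lop_eq : Lop u f = Dop f - Tan u (Tbar u f) := rfl

lemma memℓp_infty_Lop (hu : Summable fun p => ‖u p‖) (hf : Memℓp f ∞) (hDf : Memℓp (Dop f) ∞) :
    Memℓp (Lop u f) ∞ :=
  hDf.sub (memℓp_infty_Tan hu (memℓp_infty_Tbar hu hf))

lemma Lop_add (hu : Summable fun p => ‖u p‖) (hf : Memℓp f ∞) (hg : Memℓp g ∞) :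
    Lop u (f + g) = Lop u f + Lop u g := by
  simp only [Lop_eq, Dop_add, Tbar_add hu hf hg, Tan_add]
  abel

lemma Lop_sub (hu : Summable fun p => ‖u p‖) (hf : Memℓp f ∞) (hg : Memℓp g ∞) :
    Lop u (f - g) = Lop u f - Lop u g := by
  simp only [Lop_eq, Dop_sub, Tbar_sub hu hf hg, Tan_sub]
  abel

lemma Lop_smul (c : ℂ) : Lop u (c • f) = c • Lop u f := by
  simp only [Lop_eq, Dop_smul, Tbar_smul, Tan_smul, smul_sub]

lemma Lop_Sstar : Lop u (Sstar f) = Sstar (Lop u f) - Sstar f + Tbar u f 0 • Sstar u := by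
  rw [Lop_eq, Dop_Sstar, Tan_Tbar_Sstar]
  funext n
  simp only [Lop_eq, Sstar, Pi.add_apply, Pi.sub_apply, Pi.smul_apply]
  abel

lemma Lop_add_one_sq_Sstar (hu : Summable fun p => ‖u p‖) (hf : Memℓp f ∞)
    (hLf : Memℓp (Lop u f) ∞) :
    Lop u (Lop u (Sstar f)) + 2 • Lop u (Sstar f) + Sstar f
      = Sstar (Lop u (Lop u f)) + (Tbar u (Lop u f) 0 + Tbar u f 0 * Tbar u u 0) • Sstar u
        + Tbar u f 0 • Sstar (Lop u u) := by
  have hSu : Memℓp (Sstar u) ∞ := memℓp_infty_Sstar (memℓp_infty_of_summable_norm hu)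
  rw [Lop_Sstar (f := f), Lop_add hu ((memℓp_infty_Sstar hLf).sub (memℓp_infty_Sstar hf))
    (hSu.const_smul _), Lop_sub hu (memℓp_infty_Sstar hLf) (memℓp_infty_Sstar hf), Lop_smul,
    Lop_Sstar, Lop_Sstar, Lop_Sstar]
  module

end LaxPair

lemma Sstar_Bop_sub_Bop_Sstar {u f : ℕ → ℂ} (hu : Summable fun p => ‖u p‖) (hf : Memℓp f ∞) :
    Sstar (Bop u f) - Bop u (Sstar f)
      = (Tbar (dx u) f 0 + I * (Tbar u (Tan u (Tbar u f)) 0 - Tbar u f 0 * Tbar u u 0)) • Sstar u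
        - Tbar u f 0 • Sstar (dx u) + (I * Tbar u f 0) • Sstar (Tan u (Tbar u u)) := by
  have hAf : Memℓp (Tan u (Tbar u f)) ∞ := memℓp_infty_Tan hu (memℓp_infty_Tbar hu hf)
  have hSu : Memℓp (Sstar u) ∞ := memℓp_infty_Sstar (memℓp_infty_of_summable_norm hu)
  have hSstar_Bop : Sstar (Bop u f) = Sstar (Tan u (Tbar (dx u) f))
      - Sstar (Tan (dx u) (Tbar u f)) + I • Sstar (Tan u (Tbar u (Tan u (Tbar u f)))) := rfl
  have hBop_Sstar : Bop u (Sstar f) = Tan u (Tbar (dx u) (Sstar f))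
      - Tan (dx u) (Tbar u (Sstar f)) + I • Tan u (Tbar u (Tan u (Tbar u (Sstar f)))) := rfl
  rw [hSstar_Bop, hBop_Sstar, Tan_Tbar_Sstar,
    Tbar_sub hu (memℓp_infty_Sstar hAf) (hSu.const_smul _), Tbar_smul, Tan_sub, Tan_smul]
  simp only [Tbar_Sstar, Tan_Sstar]
  module

theorem shift_commutator_Bop {u f : ℕ → ℂ} (hu : Summable fun p => ‖u p‖) (hf : Memℓp f ∞)
    (hDf : Memℓp (Dop f) ∞) :
    Sstar (Bop u f) - Bop u (Sstar f)
      = I • (Sstar (Lop u (Lop u f))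
          - (Lop u (Lop u (Sstar f)) + 2 • Lop u (Sstar f) + Sstar f)) := by
  have hAf : Memℓp (Tan u (Tbar u f)) ∞ := memℓp_infty_Tan hu (memℓp_infty_Tbar hu hf)
  rw [Sstar_Bop_sub_Bop_Sstar hu hf, Lop_add_one_sq_Sstar hu hf (memℓp_infty_Lop hu hf hDf),
    Lop_eq (f := f), Tbar_sub hu hDf hAf, Tbar_dx_zero, dx_eq_smul_Dop, Lop_eq (f := u)]
  funext n
  simp only [Sstar, Pi.add_apply, Pi.sub_apply, Pi.smul_apply, smul_eq_mul]
  ring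

/-- For `u ∈ H^s₊(𝕋)`, `s > 3/2`,
`[S*, B_u] = i (S* L_u² − (L_u + Id)² S*)`. -/
theorem shift_B_commutator (s : ℝ) (hs : 3/2 < s) (u : ℕ → ℂ) (hu : MemHs s u) :
    ∀ h : ℕ → ℂ, MemHs 2 h → ∀ n : ℕ,
      Sstar (Bop u h) n - Bop u (Sstar h) n
        = Complex.I * (Sstar (Lop u (Lop u h)) n
            - (Lop u (Lop u (Sstar h)) n + 2 * Lop u (Sstar h) n + Sstar h n)) := by
  intro h hh n
  have hcomm := congrFun (shift_commutator_Bop (hu.summable_norm (by linarith))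
    (hh.memℓp_infty (by norm_num)) (hh.memℓp_infty_Dop (by norm_num))) n
  simpa only [Pi.sub_apply, Pi.add_apply, Pi.smul_apply, smul_eq_mul, nsmul_eq_mul,
    Nat.cast_ofNat, Pi.mul_apply, Pi.ofNat_apply] using hcomm

end
end
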